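/- arXiv:2404.04928 — 12 statements merged into one kernel-verified Lean document; each statement's English description precedes it below -/
import Mathlib

section
/- Let (X, ‖·‖) be a Banach space and T : X → X a (b,θ)-enriched contraction, i.e., there exist b ∈ [0,∞) and θ ∈ [0, b+1) with ‖b(x-y) + Tx - Ty‖ ≤ θ‖x-y‖ for all x, y ∈ X. Then T has exactly one fixed point. -/
theorem enriched_contraction_unique_fixed_point
    {X : Type*} [NormedAddCommGroup X] [NormedSpace ℝ X] [CompleteSpace X]
    (T : X → X) (b θ : ℝ) (hb : 0 ≤ b) (hθ0 : 0 ≤ θ) (hθ : θ < b + 1)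
    (hT : ∀ x y : X, ‖b • (x - y) + T x - T y‖ ≤ θ * ‖x - y‖) :
    ∃! p : X, T p = p := by
  have hb1 : (0:ℝ) < b + 1 := by linarith
  set f : X → X := fun x => x + (b+1)⁻¹ • (T x - x) with hf
  have key : ∀ x y, f x - f y = (b+1)⁻¹ • (b • (x - y) + T x - T y) := by
    intro x y
    simp only [hf]
    have : (b:ℝ) • (x - y) + T x - T y = (b+1) • (x - y) + ((T x - x) - (T y - y)) := by
      module
    rw [this, smul_add, smul_smul, inv_mul_cancel₀ hb1.ne', one_smul]
    module
  have hk : (0:ℝ) ≤ θ / (b+1) := by positivity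
  have hlip : LipschitzWith ⟨θ/(b+1), hk⟩ f := by
    apply LipschitzWith.of_dist_le_mul
    intro x y
    rw [dist_eq_norm, dist_eq_norm, key, norm_smul, norm_inv,
      Real.norm_of_nonneg hb1.le]
    calc (b+1)⁻¹ * ‖b • (x - y) + T x - T y‖
        ≤ (b+1)⁻¹ * (θ * ‖x - y‖) := by
          exact mul_le_mul_of_nonneg_left (hT x y) (by positivity)
      _ = θ / (b+1) * ‖x - y‖ := by ring
  have hcon : ContractingWith ⟨θ/(b+1), hk⟩ f := by
    constructor
    · refine NNReal.coe_lt_one.mp ?_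
      exact (div_lt_one hb1).mpr hθ
    · exact hlip
  have hfix : ∀ x, f x = x ↔ T x = x := by
    intro x
    simp only [hf]
    constructor
    · intro h
      have h0 : (b+1)⁻¹ • (T x - x) = 0 := by
        have := congrArg (fun z => z - x) h
        simpa using this
      rcases smul_eq_zero.mp h0 with h1 | h1
      · exact absurd h1 (inv_ne_zero hb1.ne')
      · exact sub_eq_zero.mp h1
    · intro h; rw [h]; simp
  have : Nonempty X := ⟨0⟩
  refine ⟨ContractingWith.fixedPoint f hcon, (hfix _).mp hcon.fixedPoint_isFixedPt,
    fun y hy => hcon.fixedPoint_unique ((hfix y).mpr hy)⟩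
end

section
/- Let (X, ‖·‖) be a Banach space and T : X → X a (b,θ)-enriched contraction with b ∈ [0,∞) and θ ∈ [0, b+1). Then there exists λ ∈ (0,1] such that for every x₀ ∈ X the sequence defined by x_{n+1} = (1-λ)x_n + λ T x_n converges to the unique fixed point p of T, and moreover ‖x_n - p‖ ≤ (c^n/(1-c))‖x_1 - x_0‖ for all n ≥ 1, where c = θ/(b+1). -/
theorem enriched_contraction_krasnoselskij
    {X : Type*} [NormedAddCommGroup X] [NormedSpace ℝ X] [CompleteSpace X]
    (T : X → X) (b θ : ℝ) (hb : 0 ≤ b) (hθ0 : 0 ≤ θ) (hθ : θ < b + 1)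
    (hT : ∀ x y : X, ‖b • (x - y) + T x - T y‖ ≤ θ * ‖x - y‖) :
    ∃ p : X, T p = p ∧ (∀ q : X, T q = q → q = p) ∧
      ∃ lam ∈ Set.Ioc (0:ℝ) 1, ∀ x : ℕ → X,
        (∀ n, x (n + 1) = (1 - lam) • x n + lam • T (x n)) →
        Filter.Tendsto x Filter.atTop (nhds p) ∧
        ∀ n ≥ 1, ‖x n - p‖ ≤ (θ / (b + 1)) ^ n / (1 - θ / (b + 1)) * ‖x 1 - x 0‖ := by
  have hb1 : (0:ℝ) < b + 1 := by linarith
  set lam : ℝ := 1 / (b + 1) with hlam_def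
  have hlam_pos : 0 < lam := by positivity
  have hlam_le : lam ≤ 1 := by
    rw [hlam_def, div_le_one hb1]; linarith
  set c : ℝ := θ / (b + 1) with hc_def
  have hc0 : 0 ≤ c := by positivity
  have hc1 : c < 1 := by
    rw [hc_def, div_lt_one hb1]; exact hθ
  set f : X → X := fun x => (1 - lam) • x + lam • T x with hf_def
  -- key contraction estimate
  have hkey : ∀ x y : X, ‖f x - f y‖ ≤ c * ‖x - y‖ := by
    intro x y
    have hlb : 1 - lam = lam * b := by
      rw [hlam_def]; field_simp; ring
    have heq : f x - f y = lam • (b • (x - y) + T x - T y) := by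
      simp only [hf_def, hlb]
      module
    rw [heq, norm_smul, Real.norm_eq_abs, abs_of_pos hlam_pos]
    calc lam * ‖b • (x - y) + T x - T y‖ ≤ lam * (θ * ‖x - y‖) := by
          exact mul_le_mul_of_nonneg_left (hT x y) hlam_pos.le
      _ = c * ‖x - y‖ := by
          rw [hc_def, hlam_def]; ring
  -- f is a contraction
  have hcontr : ContractingWith ⟨c, hc0⟩ f := by
    constructor
    · exact_mod_cast hc1
    · apply LipschitzWith.of_dist_le_mul
      intro x y
      rw [dist_eq_norm, dist_eq_norm]
      exact_mod_cast hkey x y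
  obtain ⟨p, hp⟩ : ∃ p : X, f p = p := ⟨_, hcontr.fixedPoint_isFixedPt⟩
  have hTp : T p = p := by
    have h := hp
    simp only [hf_def] at h
    have h1 : lam • T p = lam • p := by
      calc lam • T p = ((1 - lam) • p + lam • T p) - (1 - lam) • p := by abel
        _ = p - (1 - lam) • p := by rw [h]
        _ = lam • p := by rw [sub_smul, one_smul]; abel
    exact smul_right_injective X (ne_of_gt hlam_pos) h1
  have huniq : ∀ q : X, T q = q → q = p := by
    intro q hq
    have hfq : f q = q := by
      simp only [hf_def, hq, sub_smul, one_smul]; abel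
    have h := hkey q p
    rw [hfq, hp] at h
    by_contra hne
    have hpos : 0 < ‖q - p‖ := by
      rw [norm_pos_iff, sub_ne_zero]; exact hne
    nlinarith
  refine ⟨p, hTp, huniq, lam, ⟨hlam_pos, hlam_le⟩, ?_⟩
  intro x hx
  have hxf : ∀ n, x (n + 1) = f (x n) := fun n => hx n
  have hbound : ∀ n, ‖x n - p‖ ≤ c ^ n * ‖x 0 - p‖ := by
    intro n
    induction n with
    | zero => simp
    | succ n ih =>
      have h := hkey (x n) p
      rw [← hxf n, hp] at h
      calc ‖x (n+1) - p‖ ≤ c * ‖x n - p‖ := h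
        _ ≤ c * (c ^ n * ‖x 0 - p‖) := by
            exact mul_le_mul_of_nonneg_left ih hc0
        _ = c ^ (n+1) * ‖x 0 - p‖ := by ring
  constructor
  · rw [tendsto_iff_norm_sub_tendsto_zero]
    apply squeeze_zero (fun n => norm_nonneg _) hbound
    have : Filter.Tendsto (fun n : ℕ => c ^ n) Filter.atTop (nhds 0) :=
      tendsto_pow_atTop_nhds_zero_of_lt_one hc0 hc1
    simpa using this.mul_const ‖x 0 - p‖
  · intro n hn
    have h0 : ‖x 0 - p‖ ≤ ‖x 1 - x 0‖ / (1 - c) := by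
      have h1 : ‖x 1 - p‖ ≤ c * ‖x 0 - p‖ := by
        have h := hkey (x 0) p
        rw [← hxf 0, hp] at h; exact h
      have h2 : ‖x 0 - p‖ ≤ ‖x 1 - x 0‖ + ‖x 1 - p‖ := by
        calc ‖x 0 - p‖ = ‖(x 0 - x 1) + (x 1 - p)‖ := by abel_nf
          _ ≤ ‖x 0 - x 1‖ + ‖x 1 - p‖ := norm_add_le _ _
          _ = ‖x 1 - x 0‖ + ‖x 1 - p‖ := by rw [norm_sub_rev]
      rw [le_div_iff₀ (by linarith)]
      nlinarith
    calc ‖x n - p‖ ≤ c ^ n * ‖x 0 - p‖ := hbound n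
      _ ≤ c ^ n * (‖x 1 - x 0‖ / (1 - c)) := by
          exact mul_le_mul_of_nonneg_left h0 (pow_nonneg hc0 n)
      _ = c ^ n / (1 - c) * ‖x 1 - x 0‖ := by ring
end

section
/- If T : X → X is a (b,θ)-enriched contraction on a normed space X (b ∈ [0,∞), θ ∈ [0,b+1)), then for λ = 1/(b+1) the averaged mapping T_λ = (1-λ)I + λT is a Banach contraction with contraction constant c = θ/(b+1) < 1. -/
theorem averaged_map_of_enriched_contraction_is_contraction
    {X : Type*} [NormedAddCommGroup X] [NormedSpace ℝ X]
    (T : X → X) (b θ : ℝ) (hb : 0 ≤ b) (hθ0 : 0 ≤ θ) (hθ : θ < b + 1)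
    (hT : ∀ x y : X, ‖b • (x - y) + T x - T y‖ ≤ θ * ‖x - y‖) :
    θ / (b + 1) < 1 ∧
    ∀ x y : X,
      ‖((1 - (1 / (b + 1))) • x + (1 / (b + 1)) • T x) -
        ((1 - (1 / (b + 1))) • y + (1 / (b + 1)) • T y)‖ ≤ (θ / (b + 1)) * ‖x - y‖ := by
  have hb1 : (0:ℝ) < b + 1 := by linarith
  constructor
  · rw [div_lt_one hb1]; exact hθ
  · intro x y
    have key : ((1 - (1 / (b + 1))) • x + (1 / (b + 1)) • T x) -
        ((1 - (1 / (b + 1))) • y + (1 / (b + 1)) • T y)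
        = (1 / (b + 1)) • (b • (x - y) + T x - T y) := by
      have h : (1 : ℝ) - 1 / (b + 1) = (1 / (b + 1)) * b := by
        field_simp
        ring
      rw [h]
      module
    rw [key, norm_smul]
    have := hT x y
    calc ‖(1 / (b + 1) : ℝ)‖ * ‖b • (x - y) + T x - T y‖
        ≤ (1 / (b + 1)) * (θ * ‖x - y‖) := by
          rw [Real.norm_eq_abs, abs_of_pos (by positivity)]
          exact mul_le_mul_of_nonneg_left this (by positivity)
      _ = (θ / (b + 1)) * ‖x - y‖ := by ring
end

section
/- Let X be a real vector space equipped with both a complete metric d and a norm ‖·‖ satisfying d(x,y) ≤ ‖x-y‖ for all x,y. Suppose T : X → X is continuous with respect to d and is a (b,θ)-enriched contraction with respect to ‖·‖ (b ∈ [0,∞), θ ∈ [0,b+1)). Then T has a unique fixed point p, and there exists λ ∈ (0,1] such that the iteration x_{n+1} = (1-λ)x_n + λTx_n converges to p in (X,d) for every x₀ ∈ X. -/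
theorem maia_type_enriched_contraction
    {X : Type*} [MetricSpace X] [CompleteSpace X] [AddCommGroup X] [Module ℝ X]
    (N : X → ℝ)
    (hN0 : ∀ x : X, N x = 0 ↔ x = 0)
    (hNs : ∀ (c : ℝ) (x : X), N (c • x) = |c| * N x)
    (hNt : ∀ x y : X, N (x + y) ≤ N x + N y)
    (hdN : ∀ x y : X, dist x y ≤ N (x - y))
    (T : X → X) (hTc : Continuous T)
    (b θ : ℝ) (hb : 0 ≤ b) (hθ0 : 0 ≤ θ) (hθ : θ < b + 1)
    (hT : ∀ x y : X, N (b • (x - y) + T x - T y) ≤ θ * N (x - y)) :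
    ∃ p : X, T p = p ∧ (∀ q : X, T q = q → q = p) ∧
      ∃ lam ∈ Set.Ioc (0:ℝ) 1, ∀ x : ℕ → X,
        (∀ n, x (n + 1) = (1 - lam) • x n + lam • T (x n)) →
        Filter.Tendsto x Filter.atTop (nhds p) := by
  have hb1 : (0:ℝ) < b + 1 := by linarith
  set lam : ℝ := (b+1)⁻¹ with hlam_def
  have hlam_pos : 0 < lam := inv_pos.mpr hb1
  have hlam_le : lam ≤ 1 := by
    rw [hlam_def]
    have h1 : (1:ℝ) ≤ b + 1 := by linarith
    calc (b+1)⁻¹ ≤ 1⁻¹ := by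
          apply inv_anti₀ one_pos h1
      _ = 1 := by norm_num
  set c : ℝ := θ * lam with hc_def
  have hc0 : 0 ≤ c := mul_nonneg hθ0 hlam_pos.le
  have hc1 : c < 1 := by
    have := (div_lt_one hb1).mpr hθ
    simpa [hc_def, hlam_def, div_eq_mul_inv] using this
  have hN0' : N 0 = 0 := (hN0 0).mpr rfl
  have hNneg : ∀ x : X, N (-x) = N x := by
    intro x
    have := hNs (-1) x
    simpa using this
  have hNnn : ∀ x : X, 0 ≤ N x := by
    intro x
    have h := hNt x (-x)
    rw [add_neg_cancel, hN0', hNneg] at h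
    linarith
  have hNsymm : ∀ x y : X, N (x - y) = N (y - x) := by
    intro x y
    rw [← hNneg (x - y)]
    congr 1
    abel
  have hlb : 1 - lam = lam * b := by
    rw [hlam_def]
    field_simp
    ring
  -- contraction property of the averaged map
  have key : ∀ u v : X, N (((1-lam) • u + lam • T u) - ((1-lam) • v + lam • T v))
      ≤ c * N (u - v) := by
    intro u v
    have h1 : ((1-lam) • u + lam • T u) - ((1-lam) • v + lam • T v)
        = lam • (b • (u - v) + T u - T v) := by
      rw [hlb]
      module
    rw [h1, hNs, abs_of_pos hlam_pos]
    calc lam * N (b • (u - v) + T u - T v) ≤ lam * (θ * N (u - v)) :=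
          mul_le_mul_of_nonneg_left (hT u v) hlam_pos.le
      _ = c * N (u - v) := by rw [hc_def]; ring
  -- main claim: every iteration sequence converges to a fixed point of T
  have claim : ∀ x : ℕ → X, (∀ n, x (n+1) = (1 - lam) • x n + lam • T (x n)) →
      ∃ q : X, Filter.Tendsto x Filter.atTop (nhds q) ∧ T q = q := by
    intro x hx
    set C := N (x 1 - x 0) with hC_def
    have hCnn : 0 ≤ C := hNnn _
    have hstep : ∀ n, N (x (n+1) - x n) ≤ C * c ^ n := by
      intro n
      induction n with
      | zero => simp [hC_def]
      | succ n ih =>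
        have hk := key (x (n+1)) (x n)
        rw [← hx (n+1), ← hx n] at hk
        calc N (x (n+2) - x (n+1)) ≤ c * N (x (n+1) - x n) := hk
          _ ≤ c * (C * c ^ n) := mul_le_mul_of_nonneg_left ih hc0
          _ = C * c ^ (n+1) := by ring
    have hcauchy : CauchySeq x := by
      apply cauchySeq_of_le_geometric c C hc1
      intro n
      calc dist (x n) (x (n+1)) ≤ N (x n - x (n+1)) := hdN _ _
        _ = N (x (n+1) - x n) := hNsymm _ _
        _ ≤ C * c ^ n := hstep n
    obtain ⟨q, hq⟩ := cauchySeq_tendsto_of_complete hcauchy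
    refine ⟨q, hq, ?_⟩
    have hTq : Filter.Tendsto (fun n => T (x n)) Filter.atTop (nhds (T q)) :=
      (hTc.tendsto q).comp hq
    have hdiff : ∀ n, x n - T (x n) = lam⁻¹ • (x n - x (n+1)) := by
      intro n
      rw [hx n]
      have hne : lam ≠ 0 := hlam_pos.ne'
      match_scalars <;> field_simp <;> ring
    have hd0 : Filter.Tendsto (fun n => dist (x n) (T (x n))) Filter.atTop (nhds 0) := by
      have hle : ∀ n, dist (x n) (T (x n)) ≤ (lam⁻¹ * C) * c ^ n := by
        intro n
        calc dist (x n) (T (x n)) ≤ N (x n - T (x n)) := hdN _ _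
          _ = lam⁻¹ * N (x n - x (n+1)) := by
              rw [hdiff n, hNs, abs_of_pos (inv_pos.mpr hlam_pos)]
          _ = lam⁻¹ * N (x (n+1) - x n) := by rw [hNsymm]
          _ ≤ lam⁻¹ * (C * c ^ n) :=
              mul_le_mul_of_nonneg_left (hstep n) (inv_pos.mpr hlam_pos).le
          _ = (lam⁻¹ * C) * c ^ n := by ring
      have hg : Filter.Tendsto (fun n : ℕ => (lam⁻¹ * C) * c ^ n) Filter.atTop (nhds 0) := by
        have := (tendsto_pow_atTop_nhds_zero_of_lt_one hc0 hc1).const_mul (lam⁻¹ * C)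
        simpa using this
      exact squeeze_zero (fun n => dist_nonneg) hle hg
    have hTq' : Filter.Tendsto (fun n => T (x n)) Filter.atTop (nhds q) :=
      hq.congr_dist hd0
    exact tendsto_nhds_unique hTq hTq'
  -- construct a fixed point from the iteration started at 0
  obtain ⟨p, hp_t, hp_fix⟩ := claim (fun n => (fun z => (1 - lam) • z + lam • T z)^[n] 0)
    (fun n => Function.iterate_succ_apply' _ n 0)
  have uniq : ∀ q : X, T q = q → q = p := by
    intro q hq
    have h := hT q p
    rw [hq, hp_fix] at h
    have h2 : b • (q - p) + q - p = (b+1) • (q - p) := by module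
    rw [h2, hNs, abs_of_pos hb1] at h
    have hN : N (q - p) = 0 := by nlinarith [hNnn (q - p)]
    have := (hN0 _).mp hN
    exact sub_eq_zero.mp this
  refine ⟨p, hp_fix, uniq, lam, ⟨hlam_pos, hlam_le⟩, ?_⟩
  intro x hx
  obtain ⟨q, hq_t, hq_fix⟩ := claim x hx
  rwa [uniq q hq_fix] at hq_t
end

section
/- Let (X, ‖·‖) be a Banach space and T : X → X a (k,a)-enriched Kannan mapping, i.e., there exist a ∈ [0,1/2) and k ∈ [0,∞) such that ‖k(x-y) + Tx - Ty‖ ≤ a(‖x-Tx‖ + ‖y-Ty‖) for all x,y ∈ X. Then T has exactly one fixed point. -/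
/-- Kannan fixed point theorem. -/
theorem kannan_unique_fixed_point
    {X : Type*} [NormedAddCommGroup X] [NormedSpace ℝ X] [CompleteSpace X]
    (F : X → X) (a : ℝ) (ha0 : 0 ≤ a) (ha : a < 1 / 2)
    (hF : ∀ x y : X, ‖F x - F y‖ ≤ a * (‖x - F x‖ + ‖y - F y‖)) :
    ∃! p : X, F p = p := by
  have h1a : 0 < 1 - a := by linarith
  set r : ℝ := a / (1 - a) with hr_def
  have hr0 : 0 ≤ r := div_nonneg ha0 h1a.le
  have hr1 : r < 1 := by
    rw [div_lt_one h1a]; linarith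
  -- iterates
  let x : ℕ → X := fun n => F^[n] 0
  have hx : ∀ n, x (n + 1) = F (x n) := by
    intro n; simp [x, Function.iterate_succ_apply']
  set d : ℕ → ℝ := fun n => ‖x n - x (n + 1)‖ with hd_def
  have hd0 : ∀ n, 0 ≤ d n := fun n => norm_nonneg _
  have hstep : ∀ n, d (n + 1) ≤ r * d n := by
    intro n
    have h := hF (x n) (x (n + 1))
    rw [← hx n, ← hx (n + 1)] at h
    have : d (n + 1) ≤ a * (d n + d (n + 1)) := h
    rw [hr_def, div_mul_eq_mul_div, le_div_iff₀ h1a]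
    nlinarith [this]
  have hgeo : ∀ n, d n ≤ d 0 * r ^ n := by
    intro n
    induction n with
    | zero => simp
    | succ n ih =>
      calc d (n + 1) ≤ r * d n := hstep n
        _ ≤ r * (d 0 * r ^ n) := by nlinarith
        _ = d 0 * r ^ (n + 1) := by ring
  have hcauchy : CauchySeq x := by
    apply cauchySeq_of_le_geometric r (d 0) hr1
    intro n
    rw [dist_eq_norm]
    exact hgeo n
  obtain ⟨p, hp⟩ := cauchySeq_tendsto_of_complete hcauchy
  have hdlim : Filter.Tendsto d Filter.atTop (nhds 0) := by
    apply squeeze_zero hd0 hgeo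
    simpa using (tendsto_pow_atTop_nhds_zero_of_lt_one hr0 hr1).const_mul (d 0)
  have hfix : F p = p := by
    have key : ∀ n, ‖x (n + 1) - F p‖ ≤ a * (d n + ‖p - F p‖) := by
      intro n
      simpa only [← hx n] using hF (x n) p
    have hl : Filter.Tendsto (fun n => ‖x (n + 1) - F p‖) Filter.atTop
        (nhds ‖p - F p‖) := by
      have : Filter.Tendsto (fun n => x (n + 1)) Filter.atTop (nhds p) :=
        hp.comp (Filter.tendsto_add_atTop_nat 1)
      exact (this.sub tendsto_const_nhds).norm
    have hrl : Filter.Tendsto (fun n => a * (d n + ‖p - F p‖)) Filter.atTop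
        (nhds (a * (0 + ‖p - F p‖))) :=
      ((hdlim.add tendsto_const_nhds).const_mul a)
    have hle : ‖p - F p‖ ≤ a * (0 + ‖p - F p‖) :=
      le_of_tendsto_of_tendsto' hl hrl key
    have : ‖p - F p‖ = 0 := by nlinarith [norm_nonneg (p - F p)]
    have := sub_eq_zero.mp (norm_eq_zero.mp this)
    exact this.symm
  refine ⟨p, hfix, ?_⟩
  intro q hq
  have h := hF q p
  rw [hq, hfix] at h
  simp only [sub_self, norm_zero] at h
  have : ‖q - p‖ = 0 := le_antisymm (by linarith) (norm_nonneg _)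
  exact sub_eq_zero.mp (norm_eq_zero.mp this)

theorem enriched_kannan_unique_fixed_point
    {X : Type*} [NormedAddCommGroup X] [NormedSpace ℝ X] [CompleteSpace X]
    (T : X → X) (k a : ℝ) (hk : 0 ≤ k) (ha0 : 0 ≤ a) (ha : a < 1 / 2)
    (hT : ∀ x y : X, ‖k • (x - y) + T x - T y‖ ≤ a * (‖x - T x‖ + ‖y - T y‖)) :
    ∃! p : X, T p = p := by
  have hk1 : (0:ℝ) < k + 1 := by linarith
  set lam : ℝ := (k + 1)⁻¹ with hlam_def
  have hlam0 : 0 < lam := inv_pos.mpr hk1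
  set F : X → X := fun x => x + lam • (T x - x) with hF_def
  have hdiff : ∀ x y : X, F x - F y = lam • (k • (x - y) + T x - T y) := by
    intro x y
    simp only [hF_def]
    have hne : k + 1 ≠ 0 := hk1.ne'
    match_scalars <;> simp only [hlam_def] <;> field_simp <;> ring
  have hself : ∀ x : X, x - F x = lam • (x - T x) := by
    intro x
    simp only [hF_def]
    match_scalars <;> ring
  have hKannan : ∀ x y : X, ‖F x - F y‖ ≤ a * (‖x - F x‖ + ‖y - F y‖) := by
    intro x y
    rw [hdiff, hself, hself, norm_smul, norm_smul, norm_smul,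
      Real.norm_eq_abs, abs_of_pos hlam0]
    calc lam * ‖k • (x - y) + T x - T y‖
        ≤ lam * (a * (‖x - T x‖ + ‖y - T y‖)) := by
          exact mul_le_mul_of_nonneg_left (hT x y) hlam0.le
      _ = a * (lam * ‖x - T x‖ + lam * ‖y - T y‖) := by ring
  obtain ⟨p, hp, hpu⟩ := kannan_unique_fixed_point F a ha0 ha hKannan
  have hiff : ∀ x : X, F x = x ↔ T x = x := by
    intro x
    simp only [hF_def]
    constructor
    · intro h
      have h0 : lam • (T x - x) = 0 := by rwa [add_eq_left] at h
      rcases smul_eq_zero.mp h0 with h' | h'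
      · exact absurd h' hlam0.ne'
      · exact sub_eq_zero.mp h'
    · intro h
      rw [h]; simp
  refine ⟨p, (hiff p).mp hp, fun q hq => hpu q ((hiff q).mpr hq)⟩
end

section
/- Let (X, ‖·‖) be a Banach space and T : X → X a (k,a)-enriched Kannan mapping with a ∈ [0,1/2), k ∈ [0,∞). Then there exists λ ∈ (0,1] such that for every x₀ ∈ X the sequence x_{n+1} = (1-λ)x_n + λTx_n converges to the unique fixed point p of T, with ‖x_n - p‖ ≤ (δ^n/(1-δ))‖x_1-x_0‖ where δ = a/(1-a). -/
open Filter

private lemma kannan_aux {X : Type*} [NormedAddCommGroup X] [CompleteSpace X]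
    (S : X → X) (a : ℝ) (ha0 : 0 ≤ a) (ha : a < 1 / 2)
    (hS : ∀ x y : X, ‖S x - S y‖ ≤ a * (‖x - S x‖ + ‖y - S y‖))
    (x : ℕ → X) (hx : ∀ n, x (n + 1) = S (x n)) :
    ∃ p : X, S p = p ∧ Tendsto x atTop (nhds p) ∧
      ∀ n : ℕ, ‖x n - p‖ ≤ (a / (1 - a)) ^ n / (1 - a / (1 - a)) * ‖x 1 - x 0‖ := by
  have h1a : 0 < 1 - a := by linarith
  set δ : ℝ := a / (1 - a) with hδ
  have hδ0 : 0 ≤ δ := div_nonneg ha0 h1a.le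
  have hδ1 : δ < 1 := by rw [hδ, div_lt_one h1a]; linarith
  have hd : ∀ n, ‖x (n + 1) - x n‖ ≤ δ ^ n * ‖x 1 - x 0‖ := by
    intro n
    induction n with
    | zero => simp
    | succ n ih =>
      have h := hS (x (n + 1)) (x n)
      rw [← hx (n + 1), ← hx n, norm_sub_rev (x (n + 1)), norm_sub_rev (x n)] at h
      have h2 : (1 - a) * ‖x (n + 1 + 1) - x (n + 1)‖ ≤ a * ‖x (n + 1) - x n‖ := by
        nlinarith [h]
      have h3 : ‖x (n + 1 + 1) - x (n + 1)‖ ≤ δ * ‖x (n + 1) - x n‖ := by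
        rw [hδ, div_mul_eq_mul_div, le_div_iff₀ h1a]; nlinarith
      calc ‖x (n + 1 + 1) - x (n + 1)‖ ≤ δ * ‖x (n + 1) - x n‖ := h3
        _ ≤ δ * (δ ^ n * ‖x 1 - x 0‖) := mul_le_mul_of_nonneg_left ih hδ0
        _ = δ ^ (n + 1) * ‖x 1 - x 0‖ := by ring
  have hgeo : ∀ n, dist (x n) (x (n + 1)) ≤ ‖x 1 - x 0‖ * δ ^ n := by
    intro n
    rw [dist_eq_norm, norm_sub_rev, mul_comm]
    exact hd n
  have hcau : CauchySeq x := cauchySeq_of_le_geometric δ _ hδ1 hgeo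
  obtain ⟨p, hp⟩ := cauchySeq_tendsto_of_complete hcau
  have hfix : S p = p := by
    have key : ∀ n, (1 - a) * ‖S p - p‖ ≤ a * ‖x (n + 1) - x n‖ + ‖x (n + 1) - p‖ := by
      intro n
      have h := hS p (x n)
      rw [← hx n] at h
      have tri : ‖S p - p‖ ≤ ‖S p - x (n + 1)‖ + ‖x (n + 1) - p‖ :=
        norm_sub_le_norm_sub_add_norm_sub _ _ _
      rw [norm_sub_rev p, norm_sub_rev (x n)] at h
      nlinarith [h, tri]
    have hlim : Tendsto (fun n => a * ‖x (n + 1) - x n‖ + ‖x (n + 1) - p‖) atTop (nhds 0) := by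
      have h1 : Tendsto (fun n => x (n + 1)) atTop (nhds p) :=
        hp.comp (tendsto_add_atTop_nat 1)
      have h2 : Tendsto (fun n => ‖x (n + 1) - x n‖) atTop (nhds 0) := by
        have := (h1.sub hp).norm
        simpa using this
      have h3 : Tendsto (fun n => ‖x (n + 1) - p‖) atTop (nhds 0) := by
        have := (h1.sub (tendsto_const_nhds (x := p))).norm
        simpa using this
      have := (h2.const_mul a).add h3
      simpa using this
    have hle : (1 - a) * ‖S p - p‖ ≤ 0 := ge_of_tendsto' hlim key
    have : ‖S p - p‖ ≤ 0 := nonpos_of_mul_nonpos_right ?_ h1a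
    · have h0 : ‖S p - p‖ = 0 := le_antisymm this (norm_nonneg _)
      rwa [norm_eq_zero, sub_eq_zero] at h0
    · linarith [hle]
  refine ⟨p, hfix, hp, fun n => ?_⟩
  have := dist_le_of_le_geometric_of_tendsto δ (‖x 1 - x 0‖) hδ1 hgeo hp n
  rw [dist_eq_norm] at this
  calc ‖x n - p‖ ≤ ‖x 1 - x 0‖ * δ ^ n / (1 - δ) := this
    _ = δ ^ n / (1 - δ) * ‖x 1 - x 0‖ := by ring

theorem enriched_kannan_krasnoselskij
    {X : Type*} [NormedAddCommGroup X] [NormedSpace ℝ X] [CompleteSpace X]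
    (T : X → X) (k a : ℝ) (hk : 0 ≤ k) (ha0 : 0 ≤ a) (ha : a < 1 / 2)
    (hT : ∀ x y : X, ‖k • (x - y) + T x - T y‖ ≤ a * (‖x - T x‖ + ‖y - T y‖)) :
    ∃ p : X, T p = p ∧ (∀ q : X, T q = q → q = p) ∧
      ∃ lam ∈ Set.Ioc (0:ℝ) 1, ∀ x : ℕ → X,
        (∀ n, x (n + 1) = (1 - lam) • x n + lam • T (x n)) →
        Filter.Tendsto x Filter.atTop (nhds p) ∧
        ∀ n ≥ 1, ‖x n - p‖ ≤ (a / (1 - a)) ^ n / (1 - a / (1 - a)) * ‖x 1 - x 0‖ := by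
  have hk1 : (0:ℝ) < k + 1 := by linarith
  set lam : ℝ := 1 / (k + 1) with hlam
  have hlam0 : 0 < lam := by positivity
  have hlam1 : lam ≤ 1 := by rw [hlam, div_le_one hk1]; linarith
  have hlk : lam * k = 1 - lam := by
    rw [hlam]; field_simp; ring
  set S : X → X := fun z => (1 - lam) • z + lam • T z with hSdef
  have hkey : ∀ x y : X, S x - S y = lam • (k • (x - y) + T x - T y) := by
    intro x y
    show (1 - lam) • x + lam • T x - ((1 - lam) • y + lam • T y)
        = lam • (k • (x - y) + T x - T y)
    rw [← hlk]
    module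
  have hSx : ∀ x : X, x - S x = lam • (x - T x) := by
    intro x
    show x - ((1 - lam) • x + lam • T x) = lam • (x - T x)
    module
  have hS : ∀ x y : X, ‖S x - S y‖ ≤ a * (‖x - S x‖ + ‖y - S y‖) := by
    intro x y
    rw [hkey, hSx, hSx, norm_smul, norm_smul, norm_smul, Real.norm_eq_abs,
      abs_of_pos hlam0]
    calc lam * ‖k • (x - y) + T x - T y‖ ≤ lam * (a * (‖x - T x‖ + ‖y - T y‖)) :=
          mul_le_mul_of_nonneg_left (hT x y) hlam0.le
      _ = a * (lam * ‖x - T x‖ + lam * ‖y - T y‖) := by ring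
  have hfixT : ∀ q : X, S q = q → T q = q := by
    intro q hq
    have h2 : S q - q = lam • (T q - q) := by
      show ((1 - lam) • q + lam • T q) - q = lam • (T q - q)
      module
    rw [hq, sub_self] at h2
    rcases smul_eq_zero.mp h2.symm with h | h
    · exact absurd h hlam0.ne'
    · rw [sub_eq_zero] at h; exact h
  have hTS : ∀ q : X, T q = q → S q = q := by
    intro q hq
    show (1 - lam) • q + lam • T q = q
    rw [hq]
    module
  obtain ⟨p, hpS, hpt, hpb⟩ := kannan_aux S a ha0 ha hS (fun n => S^[n] 0)
    (fun n => Function.iterate_succ_apply' S n 0)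
  have hpT : T p = p := hfixT p hpS
  have huniq : ∀ q : X, T q = q → q = p := by
    intro q hq
    have hSq := hTS q hq
    have h := hS q p
    rw [hSq, hpS, sub_self, sub_self] at h
    simp only [norm_zero, add_zero, mul_zero] at h
    have : ‖q - p‖ ≤ 0 := h
    have h0 : ‖q - p‖ = 0 := le_antisymm this (norm_nonneg _)
    rwa [norm_eq_zero, sub_eq_zero] at h0
  refine ⟨p, hpT, huniq, lam, ⟨hlam0, hlam1⟩, fun x hx => ?_⟩
  have hx' : ∀ n, x (n + 1) = S (x n) := fun n => hx n
  obtain ⟨p', hp'S, hp't, hp'b⟩ := kannan_aux S a ha0 ha hS x hx'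
  have hpp : p' = p := huniq p' (hfixT p' hp'S)
  rw [hpp] at hp't hp'b
  exact ⟨hp't, fun n _ => hp'b n⟩
end

section
/- The map T : [0,1] → [0,1], Tx = 1 - x, is not a Kannan mapping (there is no a ∈ [0,1/2) with |Tx-Ty| ≤ a(|x-Tx|+|y-Ty|) for all x,y), but it is a (k,a)-enriched Kannan mapping for suitable k > 0 and a ∈ [0,1/2). -/
/-!
`T x = 1 - x` swaps the endpoints `0` and `1`; a map swapping two distinct points `p, q` gives
`d(p, q) = d(Tp, Tq) ≤ 2a · d(p, q)` in the Kannan condition, forcing `a ≥ 1/2`. On the other hand,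
with `k = 1` the enriched difference `k (x - y) + Tx - Ty` vanishes identically, so `a = 0` works.
-/

theorem half_le_of_kannan_of_swap {X : Type*} [MetricSpace X] {T : X → X} {p q : X}
    (hpq : p ≠ q) (hp : T p = q) (hq : T q = p) {a : ℝ}
    (h : dist (T p) (T q) ≤ a * (dist p (T p) + dist q (T q))) : 1 / 2 ≤ a := by
  rw [hp, hq, dist_comm q p] at h
  have hd : 0 < dist p q := dist_pos.2 hpq
  nlinarith

theorem one_sub_is_enriched_kannan_not_kannan :
    (¬ ∃ a : ℝ, 0 ≤ a ∧ a < 1 / 2 ∧ ∀ x ∈ Set.Icc (0:ℝ) 1, ∀ y ∈ Set.Icc (0:ℝ) 1,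
        |(1 - x) - (1 - y)| ≤ a * (|x - (1 - x)| + |y - (1 - y)|)) ∧
    ∃ k : ℝ, 0 < k ∧ ∃ a : ℝ, 0 ≤ a ∧ a < 1 / 2 ∧
      ∀ x ∈ Set.Icc (0:ℝ) 1, ∀ y ∈ Set.Icc (0:ℝ) 1,
        |k * (x - y) + (1 - x) - (1 - y)| ≤ a * (|x - (1 - x)| + |y - (1 - y)|) := by
  refine ⟨?_, 1, one_pos, 0, le_rfl, by norm_num, fun x _ y _ => ?_⟩
  · rintro ⟨a, -, ha, h⟩
    have hswap : 1 / 2 ≤ a :=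
      half_le_of_kannan_of_swap (T := fun x : ℝ => 1 - x) zero_ne_one (by norm_num) (by norm_num)
        (by simpa only [Real.dist_eq] using h 0 (by norm_num) 1 (by norm_num))
    linarith
  · rw [show (1 : ℝ) * (x - y) + (1 - x) - (1 - y) = 0 by ring, abs_zero, zero_mul]
end

section
/- Let (X, ‖·‖) be a Banach space and T : X → X a (k,a,b)-enriched Ćirić-Reich-Rus contraction: there exist k ∈ [0,∞) and a,b ≥ 0 with a/(k+1) + 2b < 1 such that ‖k(x-y)+Tx-Ty‖ ≤ a‖x-y‖ + b(‖x-Tx‖+‖y-Ty‖) for all x,y ∈ X. Then T has a unique fixed point p, and there exists λ ∈ (0,1] such that the iteration y_{n+1} = (1-λ)y_n + λTy_n converges to p for any y₀ ∈ X, with ‖y_n - p‖ ≤ α^n ‖y_0 - p‖ where α = (a + (k+1)b)/((k+1)(1-b)). -/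
theorem enriched_ciric_reich_rus
    {X : Type*} [NormedAddCommGroup X] [NormedSpace ℝ X] [CompleteSpace X]
    (T : X → X) (k a b : ℝ) (hk : 0 ≤ k) (ha : 0 ≤ a) (hb : 0 ≤ b)
    (hab : a / (k + 1) + 2 * b < 1)
    (hT : ∀ x y : X, ‖k • (x - y) + T x - T y‖ ≤ a * ‖x - y‖ + b * (‖x - T x‖ + ‖y - T y‖)) :
    ∃ p : X, T p = p ∧ (∀ q : X, T q = q → q = p) ∧
      ∃ lam ∈ Set.Ioc (0:ℝ) 1, ∀ y : ℕ → X,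
        (∀ n, y (n + 1) = (1 - lam) • y n + lam • T (y n)) →
        Filter.Tendsto y Filter.atTop (nhds p) ∧
        ∀ n : ℕ, ‖y n - p‖ ≤ ((a + (k + 1) * b) / ((k + 1) * (1 - b))) ^ n * ‖y 0 - p‖ := by
  have hk1 : (0:ℝ) < k + 1 := by linarith
  set lam : ℝ := 1 / (k + 1) with hlam_def
  have hlam0 : 0 < lam := by positivity
  have hlam1 : lam ≤ 1 := by
    rw [hlam_def, div_le_one hk1]; linarith
  have hlamk : lam * k = 1 - lam := by
    rw [hlam_def]; field_simp; ring
  set a' : ℝ := a / (k + 1) with ha'_def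
  have ha'0 : 0 ≤ a' := by positivity
  have ha'lam : a' = lam * a := by rw [ha'_def, hlam_def]; ring
  have hb2 : b < 1 / 2 := by nlinarith
  have h1b : 0 < 1 - b := by linarith
  set α : ℝ := (a + (k + 1) * b) / ((k + 1) * (1 - b)) with hα_def
  have hα0 : 0 ≤ α := by positivity
  have hα1b : α * (1 - b) = a' + b := by
    rw [hα_def, ha'_def]; field_simp
  have hα1 : α < 1 := by
    rw [hα_def, div_lt_one (by positivity)]
    nlinarith [hab, hk1]
  set S : X → X := fun x => (1 - lam) • x + lam • T x with hS_def
  -- basic identities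
  have hxSx : ∀ x : X, x - S x = lam • (x - T x) := by
    intro x
    simp only [hS_def, smul_sub]
    module
  have hSxy : ∀ x y : X, S x - S y = lam • (k • (x - y) + T x - T y) := by
    intro x y
    simp only [hS_def, smul_add, smul_sub, smul_smul, hlamk]
    module
  have hnorm_smul : ∀ z : X, ‖lam • z‖ = lam * ‖z‖ := by
    intro z
    rw [norm_smul, Real.norm_of_nonneg hlam0.le]
  -- main contraction inequality for S
  have hA : ∀ x y : X, ‖S x - S y‖ ≤ a' * ‖x - y‖ + b * ‖x - S x‖ + b * ‖y - S y‖ := by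
    intro x y
    have h1 : ‖S x - S y‖ = lam * ‖k • (x - y) + T x - T y‖ := by
      rw [hSxy, hnorm_smul]
    have h2 := hT x y
    have h3 : ‖x - S x‖ = lam * ‖x - T x‖ := by rw [hxSx, hnorm_smul]
    have h4 : ‖y - S y‖ = lam * ‖y - T y‖ := by rw [hxSx, hnorm_smul]
    rw [h1, h3, h4, ha'lam]
    calc lam * ‖k • (x - y) + T x - T y‖
        ≤ lam * (a * ‖x - y‖ + b * (‖x - T x‖ + ‖y - T y‖)) :=
          mul_le_mul_of_nonneg_left h2 hlam0.le
      _ = lam * a * ‖x - y‖ + b * (lam * ‖x - T x‖) + b * (lam * ‖y - T y‖) := by ring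
  -- step contraction: norm of consecutive differences
  have hstep : ∀ x : X, ‖S x - S (S x)‖ ≤ α * ‖x - S x‖ := by
    intro x
    have h := hA x (S x)
    have h2 : ‖S x - S (S x)‖ * (1 - b) ≤ (α * ‖x - S x‖) * (1 - b) := by
      rw [mul_comm (α * ‖x - S x‖) (1 - b), ← mul_assoc, mul_comm (1 - b) α, hα1b]
      nlinarith [norm_nonneg (x - S x), norm_nonneg (S x - S (S x))]
    exact le_of_mul_le_mul_right h2 h1b
  -- Picard iteration
  set x : ℕ → X := fun n => S^[n] 0 with hx_def
  have hx_succ : ∀ n, x (n + 1) = S (x n) := by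
    intro n
    simp [hx_def, Function.iterate_succ_apply']
  have hd : ∀ n, ‖x n - x (n + 1)‖ ≤ ‖x 0 - x 1‖ * α ^ n := by
    intro n
    induction n with
    | zero => simp
    | succ n ih =>
      have h := hstep (x n)
      rw [← hx_succ n] at h
      rw [hx_succ (n+1)] at *
      calc ‖x (n+1) - S (x (n+1))‖ ≤ α * ‖x n - x (n+1)‖ := by
              rw [hx_succ n]; exact hstep (x n)
        _ ≤ α * (‖x 0 - x 1‖ * α ^ n) := by
              exact mul_le_mul_of_nonneg_left ih hα0
        _ = ‖x 0 - x 1‖ * α ^ (n + 1) := by ring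
  have hcauchy : CauchySeq x := by
    apply cauchySeq_of_le_geometric α (‖x 0 - x 1‖) hα1
    intro n
    rw [dist_eq_norm]
    exact hd n
  obtain ⟨p, hp⟩ := cauchySeq_tendsto_of_complete hcauchy
  -- auxiliary limits
  have hxp0 : Filter.Tendsto (fun n => ‖p - x n‖) Filter.atTop (nhds 0) := by
    have h : Filter.Tendsto (fun n => p - x n) Filter.atTop (nhds (p - p)) :=
      tendsto_const_nhds.sub hp
    have h2 := h.norm
    rwa [sub_self, norm_zero] at h2
  have hxp0' : Filter.Tendsto (fun n => ‖p - x (n + 1)‖) Filter.atTop (nhds 0) :=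
    hxp0.comp (Filter.tendsto_add_atTop_nat 1)
  have hd0 : Filter.Tendsto (fun n => ‖x n - x (n + 1)‖) Filter.atTop (nhds 0) := by
    apply squeeze_zero (fun n => norm_nonneg _) hd
    have := tendsto_pow_atTop_nhds_zero_of_lt_one hα0 hα1
    have h2 := this.const_mul (‖x 0 - x 1‖)
    simpa using h2
  -- p is a fixed point of S
  have hSp : S p = p := by
    have key : ∀ n, ‖p - S p‖ ≤
        ‖p - x (n + 1)‖ + (a' * ‖p - x n‖ + b * ‖x n - x (n + 1)‖) + b * ‖p - S p‖ := by
      intro n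
      have h1 : ‖p - S p‖ ≤ ‖p - x (n + 1)‖ + ‖x (n + 1) - S p‖ := by
        have := norm_sub_le_norm_sub_add_norm_sub p (x (n+1)) (S p)
        linarith [norm_sub_le (p - x (n+1)) (S p - x (n+1))]
      have h2 : ‖x (n + 1) - S p‖ ≤ a' * ‖x n - p‖ + b * ‖x n - x (n + 1)‖ + b * ‖p - S p‖ := by
        have h := hA (x n) p
        rw [← hx_succ n] at h
        exact h
      rw [norm_sub_rev (x n) p] at h2
      linarith
    have hlim : Filter.Tendsto
        (fun n => ‖p - x (n + 1)‖ + (a' * ‖p - x n‖ + b * ‖x n - x (n + 1)‖) + b * ‖p - S p‖)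
        Filter.atTop (nhds (0 + (a' * 0 + b * 0) + b * ‖p - S p‖)) := by
      exact ((hxp0'.add ((hxp0.const_mul a').add (hd0.const_mul b))).add tendsto_const_nhds)
    have hle : ‖p - S p‖ ≤ 0 + (a' * 0 + b * 0) + b * ‖p - S p‖ :=
      ge_of_tendsto hlim (Filter.Eventually.of_forall key)
    have : ‖p - S p‖ = 0 := by nlinarith [norm_nonneg (p - S p)]
    have h0 : p - S p = 0 := norm_eq_zero.mp this
    have := sub_eq_zero.mp h0
    exact this.symm
  -- p is a fixed point of T
  have hTp : T p = p := by
    have h := hxSx p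
    rw [hSp, sub_self] at h
    have h2 := h.symm
    rcases smul_eq_zero.mp h2 with h | h
    · exact absurd h hlam0.ne'
    · exact (sub_eq_zero.mp h).symm
  -- contraction toward p
  have hBp : ∀ z : X, ‖S z - p‖ ≤ α * ‖z - p‖ := by
    intro z
    have hpSp : ‖p - S p‖ = 0 := by rw [hSp, sub_self, norm_zero]
    have h := hA z p
    rw [hpSp, hSp] at h
    have h2 : ‖z - S z‖ ≤ ‖z - p‖ + ‖S z - p‖ := by
      have := norm_sub_le_norm_sub_add_norm_sub z p (S z)
      linarith [norm_sub_rev p (S z), norm_sub_rev (S z) p]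
    have h3 : ‖S z - p‖ * (1 - b) ≤ (α * ‖z - p‖) * (1 - b) := by
      rw [mul_comm (α * ‖z - p‖) (1 - b), ← mul_assoc, mul_comm (1 - b) α, hα1b]
      have h4 := mul_le_mul_of_nonneg_left h2 hb
      nlinarith [h4, h]
    exact le_of_mul_le_mul_right h3 h1b
  refine ⟨p, hTp, ?_, lam, ⟨hlam0, hlam1⟩, ?_⟩
  · -- uniqueness
    intro q hq
    have h := hT q p
    rw [hq, hTp] at h
    have h1 : ‖k • (q - p) + q - p‖ = (k + 1) * ‖q - p‖ := by
      have : k • (q - p) + q - p = (k + 1) • (q - p) := by module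
      rw [this, norm_smul, Real.norm_of_nonneg (by linarith)]
    rw [h1, sub_self, sub_self, norm_zero] at h
    have hak : a < k + 1 := by
      have h5 : a / (k + 1) < 1 := by linarith
      exact (div_lt_one hk1).mp h5
    have h8 : (k + 1) * ‖q - p‖ ≤ a * ‖q - p‖ := by linarith
    rcases eq_or_lt_of_le (norm_nonneg (q - p)) with h9 | h9
    · exact sub_eq_zero.mp (norm_eq_zero.mp h9.symm)
    · exfalso
      have h10 : k + 1 ≤ a := le_of_mul_le_mul_right h8 h9
      linarith
  · -- convergence of the Krasnoselskij iteration
    intro y hy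
    have hyS : ∀ n, y (n + 1) = S (y n) := fun n => hy n
    have bound : ∀ n : ℕ, ‖y n - p‖ ≤ α ^ n * ‖y 0 - p‖ := by
      intro n
      induction n with
      | zero => simp
      | succ n ih =>
        calc ‖y (n + 1) - p‖ = ‖S (y n) - p‖ := by rw [hyS]
          _ ≤ α * ‖y n - p‖ := hBp (y n)
          _ ≤ α * (α ^ n * ‖y 0 - p‖) := mul_le_mul_of_nonneg_left ih hα0
          _ = α ^ (n + 1) * ‖y 0 - p‖ := by ring
    constructor
    · have h0 : Filter.Tendsto (fun n => ‖y n - p‖) Filter.atTop (nhds 0) := by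
        apply squeeze_zero (fun n => norm_nonneg _) bound
        have := (tendsto_pow_atTop_nhds_zero_of_lt_one hα0 hα1).mul_const (‖y 0 - p‖)
        simpa using this
      exact tendsto_iff_norm_sub_tendsto_zero.mpr h0
    · exact bound
end

section
/- Let (X, ‖·‖) be a Banach space and T : X → X a (k,b)-enriched Chatterjea mapping: there exist b ∈ [0,1/2) and k ∈ [0,∞) such that ‖k(x-y)+Tx-Ty‖ ≤ b(‖(k+1)(x-y)+y-Ty‖ + ‖(k+1)(y-x)+x-Tx‖) for all x,y ∈ X. Then T has exactly one fixed point, and there exists λ ∈ (0,1] such that the Krasnoselskij iteration x_{n+1} = (1-λ)x_n + λTx_n converges to it for every starting point. -/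
/-!
With `λ = 1 / (k + 1)`, the averaged map `S = (1 - λ) • id + λ • T` satisfies
`S x - S y = λ • (k • (x - y) + T x - T y)` and `x - S y = λ • ((k + 1) • (x - y) + y - T y)`,
so the enriched condition for `T` is exactly Chatterjea's condition
`dist (S x) (S y) ≤ b * (dist x (S y) + dist y (S x))` for `S`, and `S` has the same fixed
points as `T`. Chatterjea's theorem then applies to `S`: consecutive steps of an orbit shrink
by the factor `b / (1 - b) < 1`, so orbits are Cauchy, and their limit is the unique fixed point.
-/

open Filter Topology Function

def ChatterjeaWith {α : Type*} [Dist α] (b : ℝ) (S : α → α) : Prop :=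
  ∀ x y, dist (S x) (S y) ≤ b * (dist x (S y) + dist y (S x))

namespace ChatterjeaWith

variable {α : Type*} [MetricSpace α] {b : ℝ} {S : α → α}

theorem eq_of_isFixedPt (hS : ChatterjeaWith b S) (hb : b < 1 / 2) {p q : α}
    (hp : IsFixedPt S p) (hq : IsFixedPt S q) : p = q := by
  have h := hS p q
  rw [hp, hq, dist_comm q p] at h
  exact dist_le_zero.mp (by nlinarith [dist_nonneg (x := p) (y := q)])

theorem dist_succ_le (hS : ChatterjeaWith b S) (hb0 : 0 ≤ b) (hb : b < 1) {x : ℕ → α}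
    (hx : ∀ n, x (n + 1) = S (x n)) (n : ℕ) :
    dist (x (n + 1)) (x (n + 2)) ≤ b / (1 - b) * dist (x n) (x (n + 1)) := by
  have h := hS (x n) (x (n + 1))
  rw [← hx, ← hx, dist_self, add_zero] at h
  have htri := dist_triangle (x n) (x (n + 1)) (x (n + 2))
  rw [div_mul_eq_mul_div, le_div_iff₀ (by linarith)]
  nlinarith [mul_le_mul_of_nonneg_left htri hb0]

theorem cauchySeq (hS : ChatterjeaWith b S) (hb0 : 0 ≤ b) (hb : b < 1 / 2) {x : ℕ → α}
    (hx : ∀ n, x (n + 1) = S (x n)) : CauchySeq x := by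
  have hc0 : 0 ≤ b / (1 - b) := div_nonneg hb0 (by linarith)
  have hc1 : b / (1 - b) < 1 := by rw [div_lt_one (by linarith)]; linarith
  refine cauchySeq_of_le_geometric _ (dist (x 0) (x 1)) hc1 fun n => ?_
  rw [mul_comm]
  exact le_geom (u := fun n => dist (x n) (x (n + 1))) hc0 n fun m _ =>
    hS.dist_succ_le hb0 (by linarith) hx m

theorem isFixedPt_of_tendsto (hS : ChatterjeaWith b S) (hb : b < 1) {x : ℕ → α}
    (hx : ∀ n, x (n + 1) = S (x n)) {p : α} (hp : Tendsto x atTop (𝓝 p)) :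
    IsFixedPt S p := by
  have hp' : Tendsto (fun n => x (n + 1)) atTop (𝓝 p) := hp.comp (tendsto_add_atTop_nat 1)
  -- Pass to the limit in `dist (S (x n)) (S p) ≤ b * (dist (x n) (S p) + dist p (x (n + 1)))`.
  have hle : dist p (S p) ≤ b * (dist p (S p) + dist p p) :=
    le_of_tendsto_of_tendsto' (hp'.dist tendsto_const_nhds)
      (((hp.dist tendsto_const_nhds).add (tendsto_const_nhds.dist hp')).const_mul b)
      fun n => by simpa only [hx] using hS (x n) p
  rw [dist_self, add_zero] at hle
  exact (dist_le_zero.mp (by nlinarith [dist_nonneg (x := p) (y := S p)])).symm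

theorem exists_isFixedPt_tendsto [CompleteSpace α] [Nonempty α] (hS : ChatterjeaWith b S)
    (hb0 : 0 ≤ b) (hb : b < 1 / 2) :
    ∃ p, IsFixedPt S p ∧ ∀ x : ℕ → α, (∀ n, x (n + 1) = S (x n)) → Tendsto x atTop (𝓝 p) := by
  have hlim : ∀ x : ℕ → α, (∀ n, x (n + 1) = S (x n)) →
      ∃ p, IsFixedPt S p ∧ Tendsto x atTop (𝓝 p) := fun x hx => by
    obtain ⟨p, hp⟩ := cauchySeq_tendsto_of_complete (hS.cauchySeq hb0 hb hx)
    exact ⟨p, hS.isFixedPt_of_tendsto (by linarith) hx hp, hp⟩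
  obtain ⟨p, hp, -⟩ := hlim (fun n => S^[n] (Classical.arbitrary α))
    fun n => iterate_succ_apply' S n _
  refine ⟨p, hp, fun x hx => ?_⟩
  obtain ⟨q, hq, hxq⟩ := hlim x hx
  rwa [hS.eq_of_isFixedPt hb hq hp] at hxq

end ChatterjeaWith

section Krasnoselskij

variable {X : Type*} [AddCommGroup X] [Module ℝ X]

def krasnoselskij (lam : ℝ) (T : X → X) (z : X) : X :=
  (1 - lam) • z + lam • T z

theorem krasnoselskij_sub_self (lam : ℝ) (T : X → X) (z : X) :
    krasnoselskij lam T z - z = lam • (T z - z) := by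
  simp only [krasnoselskij, smul_sub, sub_smul, one_smul]
  abel

theorem isFixedPt_krasnoselskij_iff {lam : ℝ} (hlam : lam ≠ 0) {T : X → X} {z : X} :
    IsFixedPt (krasnoselskij lam T) z ↔ IsFixedPt T z := by
  rw [IsFixedPt, IsFixedPt, ← sub_eq_zero, krasnoselskij_sub_self, smul_eq_zero,
    sub_eq_zero, or_iff_right hlam]

variable {k lam : ℝ} (T : X → X)

theorem krasnoselskij_sub_krasnoselskij (hlk : lam * (k + 1) = 1) (x y : X) :
    krasnoselskij lam T x - krasnoselskij lam T y = lam • (k • (x - y) + T x - T y) := by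
  have hk : lam * k = 1 - lam := by linarith
  simp only [krasnoselskij, smul_add, smul_sub, smul_smul, hk]
  module

theorem sub_krasnoselskij (hlk : lam * (k + 1) = 1) (x y : X) :
    x - krasnoselskij lam T y = lam • ((k + 1) • (x - y) + y - T y) := by
  simp only [krasnoselskij, smul_add, smul_sub, smul_smul, hlk, one_smul]
  module

end Krasnoselskij

theorem chatterjeaWith_krasnoselskij {X : Type*} [NormedAddCommGroup X] [NormedSpace ℝ X]
    {k lam b : ℝ} (T : X → X) (hlam : 0 ≤ lam) (hlk : lam * (k + 1) = 1)
    (hT : ∀ x y : X, ‖k • (x - y) + T x - T y‖ ≤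
        b * (‖(k + 1) • (x - y) + y - T y‖ + ‖(k + 1) • (y - x) + x - T x‖)) :
    ChatterjeaWith b (krasnoselskij lam T) := fun x y => by
  simp only [dist_eq_norm, krasnoselskij_sub_krasnoselskij T hlk, sub_krasnoselskij T hlk,
    norm_smul, Real.norm_of_nonneg hlam]
  nlinarith [mul_le_mul_of_nonneg_left (hT x y) hlam]

theorem enriched_chatterjea
    {X : Type*} [NormedAddCommGroup X] [NormedSpace ℝ X] [CompleteSpace X]
    (T : X → X) (k b : ℝ) (hk : 0 ≤ k) (hb0 : 0 ≤ b) (hb : b < 1 / 2)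
    (hT : ∀ x y : X, ‖k • (x - y) + T x - T y‖ ≤
        b * (‖(k + 1) • (x - y) + y - T y‖ + ‖(k + 1) • (y - x) + x - T x‖)) :
    ∃ p : X, T p = p ∧ (∀ q : X, T q = q → q = p) ∧
      ∃ lam ∈ Set.Ioc (0:ℝ) 1, ∀ x : ℕ → X,
        (∀ n, x (n + 1) = (1 - lam) • x n + lam • T (x n)) →
        Filter.Tendsto x Filter.atTop (nhds p) := by
  set lam := (k + 1)⁻¹
  have hlam : lam ∈ Set.Ioc (0 : ℝ) 1 := ⟨by positivity, inv_le_one_of_one_le₀ (by linarith)⟩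
  have hlk : lam * (k + 1) = 1 := inv_mul_cancel₀ (by positivity)
  have hS := chatterjeaWith_krasnoselskij T hlam.1.le hlk hT
  have hfix : ∀ z, IsFixedPt (krasnoselskij lam T) z ↔ T z = z :=
    fun z => isFixedPt_krasnoselskij_iff hlam.1.ne'
  obtain ⟨p, hp, hconv⟩ := hS.exists_isFixedPt_tendsto hb0 hb
  exact ⟨p, (hfix p).1 hp, fun q hq => hS.eq_of_isFixedPt hb ((hfix q).2 hq) hp, lam, hlam,
    hconv⟩
end

section
/- Let (X, ‖·‖) be a Banach space and T : X → X an enriched (b,θ,L)-almost contraction: there exist b ∈ [0,∞), θ ∈ (0,b+1), L ≥ 0 with ‖b(x-y)+Tx-Ty‖ ≤ θ‖x-y‖ + L‖b(x-y)+Tx-y‖ for all x,y ∈ X. Then T has at least one fixed point, and there exists λ ∈ (0,1) such that the iteration x_{n+1} = (1-λ)x_n + λTx_n converges to some fixed point of T for every x₀ ∈ X. -/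
theorem enriched_almost_contraction
    {X : Type*} [NormedAddCommGroup X] [NormedSpace ℝ X] [CompleteSpace X]
    (T : X → X) (b θ L : ℝ) (hb : 0 ≤ b) (hθ0 : 0 < θ) (hθ : θ < b + 1) (hL : 0 ≤ L)
    (hT : ∀ x y : X, ‖b • (x - y) + T x - T y‖ ≤
        θ * ‖x - y‖ + L * ‖b • (x - y) + T x - y‖) :
    (∃ p : X, T p = p) ∧
      ∃ lam ∈ Set.Ioo (0:ℝ) 1, ∀ x : ℕ → X,
        (∀ n, x (n + 1) = (1 - lam) • x n + lam • T (x n)) →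
        ∃ q : X, T q = q ∧ Filter.Tendsto x Filter.atTop (nhds q) := by
  set ε : ℝ := (b + 1 - θ) / (2 * (L + 1)) with hεdef
  have hε : 0 < ε := div_pos (by linarith) (by linarith)
  have hεL : ε * (L + 1) = (b + 1 - θ) / 2 := by
    rw [hεdef]; field_simp
  set lam : ℝ := 1 / (b + ε + 1) with hlamdef
  have hden : 0 < b + ε + 1 := by linarith
  have hlam0 : 0 < lam := by rw [hlamdef]; positivity
  have hlam1 : lam < 1 := by rw [hlamdef, div_lt_one hden]; linarith
  have hkey : 1 - lam = lam * (b + ε) := by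
    rw [hlamdef]; field_simp; ring
  have hinv : (b + ε + 1) * lam = 1 := by
    rw [hlamdef]; field_simp
  set c : ℝ := lam * (θ + ε * (1 + L)) with hcdef
  have hc0 : 0 ≤ c := by
    have : 0 ≤ θ + ε * (1 + L) := by nlinarith
    positivity
  have hc1 : c < 1 := by
    have hc' : c = (θ + ε * (1 + L)) / (b + ε + 1) := by
      rw [hcdef, hlamdef]; ring
    rw [hc', div_lt_one hden]
    nlinarith
  set Tl : X → X := fun x => (1 - lam) • x + lam • T x with hTl
  -- main almost-contraction inequality for Tl
  have hmain : ∀ x y : X, ‖Tl x - Tl y‖ ≤ c * ‖x - y‖ + L * ‖Tl x - y‖ := by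
    intro x y
    have id1 : Tl x - Tl y = lam • (b • (x - y) + T x - T y) + (lam * ε) • (x - y) := by
      simp only [hTl]
      rw [hkey]
      module
    have id2 : b • (x - y) + T x - y = (b + ε + 1) • (Tl x - y) - ε • (x - y) := by
      simp only [hTl]
      rw [hkey]
      rw [show ((b + ε + 1 : ℝ)) • ((lam * (b + ε)) • x + lam • T x - y)
          = ((b + ε + 1) * (lam * (b + ε))) • x + ((b + ε + 1) * lam) • T x - (b + ε + 1) • y by
        module]
      rw [hinv, show (b + ε + 1) * (lam * (b + ε)) = (b + ε) * ((b + ε + 1) * lam) by ring, hinv]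
      module
    have h1 : ‖Tl x - Tl y‖ ≤ lam * ‖b • (x - y) + T x - T y‖ + lam * ε * ‖x - y‖ := by
      rw [id1]
      calc ‖lam • (b • (x - y) + T x - T y) + (lam * ε) • (x - y)‖
          ≤ ‖lam • (b • (x - y) + T x - T y)‖ + ‖(lam * ε) • (x - y)‖ := norm_add_le _ _
        _ = lam * ‖b • (x - y) + T x - T y‖ + lam * ε * ‖x - y‖ := by
            rw [norm_smul, norm_smul, Real.norm_eq_abs, Real.norm_eq_abs,
              abs_of_pos hlam0, abs_of_pos (by positivity : (0:ℝ) < lam * ε)]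
    have h2 : ‖b • (x - y) + T x - y‖ ≤ (b + ε + 1) * ‖Tl x - y‖ + ε * ‖x - y‖ := by
      rw [id2]
      calc ‖(b + ε + 1) • (Tl x - y) - ε • (x - y)‖
          ≤ ‖(b + ε + 1) • (Tl x - y)‖ + ‖ε • (x - y)‖ := norm_sub_le _ _
        _ = (b + ε + 1) * ‖Tl x - y‖ + ε * ‖x - y‖ := by
            rw [norm_smul, norm_smul, Real.norm_eq_abs, Real.norm_eq_abs,
              abs_of_pos hden, abs_of_pos hε]
    have h3 := hT x y
    have hnn1 : (0:ℝ) ≤ ‖x - y‖ := norm_nonneg _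
    have hnn2 : (0:ℝ) ≤ ‖Tl x - y‖ := norm_nonneg _
    calc ‖Tl x - Tl y‖ ≤ lam * ‖b • (x - y) + T x - T y‖ + lam * ε * ‖x - y‖ := h1
      _ ≤ lam * (θ * ‖x - y‖ + L * ‖b • (x - y) + T x - y‖) + lam * ε * ‖x - y‖ := by
          have := mul_le_mul_of_nonneg_left h3 hlam0.le
          linarith
      _ ≤ lam * (θ * ‖x - y‖ + L * ((b + ε + 1) * ‖Tl x - y‖ + ε * ‖x - y‖))
            + lam * ε * ‖x - y‖ := by
          have := mul_le_mul_of_nonneg_left h2 hL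
          have := mul_le_mul_of_nonneg_left (mul_le_mul_of_nonneg_left h2 hL) hlam0.le
          linarith
      _ = c * ‖x - y‖ + (lam * (b + ε + 1)) * L * ‖Tl x - y‖ := by rw [hcdef]; ring
      _ = c * ‖x - y‖ + L * ‖Tl x - y‖ := by
          rw [show lam * (b + ε + 1) = (b + ε + 1) * lam by ring, hinv]; ring
  -- the convergence statement for any Krasnoselskii iteration
  have hconv : ∀ x : ℕ → X, (∀ n, x (n + 1) = (1 - lam) • x n + lam • T (x n)) →
      ∃ q : X, T q = q ∧ Filter.Tendsto x Filter.atTop (nhds q) := by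
    intro x hx
    have hx' : ∀ n, x (n + 1) = Tl (x n) := fun n => hx n
    have hstep : ∀ n, ‖x (n + 1) - x (n + 2)‖ ≤ c * ‖x n - x (n + 1)‖ := by
      intro n
      have := hmain (x n) (x (n + 1))
      rw [← hx' n, ← hx' (n + 1)] at this
      simpa using this
    have hgeo : ∀ n, ‖x n - x (n + 1)‖ ≤ ‖x 0 - x 1‖ * c ^ n := by
      intro n
      induction n with
      | zero => simp
      | succ k ih =>
        calc ‖x (k + 1) - x (k + 2)‖ ≤ c * ‖x k - x (k + 1)‖ := hstep k
          _ ≤ c * (‖x 0 - x 1‖ * c ^ k) := mul_le_mul_of_nonneg_left ih hc0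
          _ = ‖x 0 - x 1‖ * c ^ (k + 1) := by ring
    have hcauchy : CauchySeq x := by
      apply cauchySeq_of_le_geometric c (‖x 0 - x 1‖) hc1
      intro n
      rw [dist_eq_norm]
      exact hgeo n
    obtain ⟨q, hq⟩ := cauchySeq_tendsto_of_complete hcauchy
    have hq1 : Filter.Tendsto (fun n => x (n + 1)) Filter.atTop (nhds q) :=
      hq.comp (Filter.tendsto_add_atTop_nat 1)
    have hfix : Tl q = q := by
      have hbound : ∀ n, ‖q - Tl q‖ ≤
          ‖q - x (n + 1)‖ + (c * ‖x n - q‖ + L * ‖x (n + 1) - q‖) := by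
        intro n
        have h := hmain (x n) q
        rw [← hx' n] at h
        calc ‖q - Tl q‖ ≤ ‖q - x (n + 1)‖ + ‖x (n + 1) - Tl q‖ := by
              have := norm_add_le (q - x (n + 1)) (x (n + 1) - Tl q)
              simpa using this
          _ ≤ ‖q - x (n + 1)‖ + (c * ‖x n - q‖ + L * ‖x (n + 1) - q‖) := by linarith
      have htend : Filter.Tendsto
          (fun n => ‖q - x (n + 1)‖ + (c * ‖x n - q‖ + L * ‖x (n + 1) - q‖))
          Filter.atTop (nhds 0) := by
        have t1 : Filter.Tendsto (fun n => ‖q - x (n + 1)‖) Filter.atTop (nhds 0) := by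
          have := ((tendsto_const_nhds.sub hq1).norm :
            Filter.Tendsto (fun n => ‖q - x (n + 1)‖) Filter.atTop (nhds ‖q - q‖))
          simpa using this
        have t2 : Filter.Tendsto (fun n => ‖x n - q‖) Filter.atTop (nhds 0) := by
          have := ((hq.sub tendsto_const_nhds).norm :
            Filter.Tendsto (fun n => ‖x n - q‖) Filter.atTop (nhds ‖q - q‖))
          simpa using this
        have t3 : Filter.Tendsto (fun n => ‖x (n + 1) - q‖) Filter.atTop (nhds 0) := by
          have := ((hq1.sub tendsto_const_nhds).norm :
            Filter.Tendsto (fun n => ‖x (n + 1) - q‖) Filter.atTop (nhds ‖q - q‖))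
          simpa using this
        have := t1.add ((t2.const_mul c).add (t3.const_mul L))
        simpa using this
      have hle : ‖q - Tl q‖ ≤ 0 :=
        ge_of_tendsto' htend hbound
      have : ‖q - Tl q‖ = 0 := le_antisymm hle (norm_nonneg _)
      have := sub_eq_zero.mp (norm_eq_zero.mp this)
      exact this.symm
    have hfixT : T q = q := by
      have h1 : (1 - lam) • q + lam • T q = q := hfix
      have h2 : lam • T q = lam • q := by
        have h3 : lam • T q = q - (1 - lam) • q := eq_sub_of_add_eq' h1
        rw [h3, sub_smul, one_smul]
        abel
      exact smul_right_injective X (ne_of_gt hlam0) h2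
    exact ⟨q, hfixT, hq⟩
  constructor
  · -- existence: run the iteration from 0
    set x : ℕ → X := fun n => Tl^[n] 0 with hxdef
    have hxrec : ∀ n, x (n + 1) = (1 - lam) • x n + lam • T (x n) := by
      intro n
      simp only [hxdef, Function.iterate_succ_apply']; rfl
    obtain ⟨q, hq, _⟩ := hconv x hxrec
    exact ⟨q, hq⟩
  · exact ⟨lam, ⟨hlam0, hlam1⟩, hconv⟩
end

section
/- Let (X, ‖·‖) be a Banach space and T : X → X an enriched (b,φ)-contraction: there exist b ∈ [0,∞) and a comparison function φ : ℝ₊ → ℝ₊ (nondecreasing with φⁿ(t) → 0 for all t ≥ 0) such that ‖b(x-y)+Tx-Ty‖ ≤ (b+1)φ(‖x-y‖) for all x,y ∈ X. Then T has a unique fixed point p, and there exists λ ∈ (0,1] such that the iteration x_{n+1} = (1-λ)x_n + λTx_n converges strongly to p for any x₀ ∈ X. -/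
/-!
With `λ = 1 / (b + 1)` the averaged map `S x = (1 - λ) x + λ T x` satisfies
`S x - S y = λ (b (x - y) + T x - T y)`, so the enriched condition says exactly that `S` is a
`φ`-contraction: `‖S x - S y‖ ≤ φ ‖x - y‖`. Its fixed points are those of `T`, and the iteration of
the theorem is the Picard iteration of `S`. A `φ`-contraction of a complete metric space has a
unique fixed point attracting every Picard orbit (Matkowski): distances along two orbits are
dominated by `φⁿ`, and since `φ t < t` for `t > 0`, once consecutive steps are shorter than
`ε - φ ε` an orbit can no longer leave the `ε`-ball around its current point.
-/

open Filter Topology Function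

structure IsComparisonFunction (φ : ℝ → ℝ) : Prop where
  mono : ∀ s t : ℝ, 0 ≤ s → s ≤ t → φ s ≤ φ t
  tendsto_iterate : ∀ t : ℝ, 0 ≤ t → Tendsto (fun n => φ^[n] t) atTop (𝓝 0)

namespace IsComparisonFunction

variable {φ : ℝ → ℝ}

theorem lt_self (hφ : IsComparisonFunction φ) {t : ℝ} (ht : 0 < t) : φ t < t := by
  by_contra! h
  have h_le_iterate : ∀ n, t ≤ φ^[n + 1] t := by
    intro n
    induction n with
    | zero => simpa using h
    | succ n ih =>
      rw [iterate_succ_apply']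
      exact h.trans (hφ.mono _ _ ht.le ih)
  have := ge_of_tendsto ((hφ.tendsto_iterate t ht.le).comp (tendsto_add_atTop_nat 1))
    (Eventually.of_forall h_le_iterate)
  linarith

theorem tendsto_zero_of_le_map (hφ : IsComparisonFunction φ) {u : ℕ → ℝ} (hu0 : ∀ n, 0 ≤ u n)
    (hu : ∀ n, u (n + 1) ≤ φ (u n)) : Tendsto u atTop (𝓝 0) := by
  have h_le_iterate : ∀ n, u n ≤ φ^[n] (u 0) := by
    intro n
    induction n with
    | zero => rfl
    | succ n ih =>
      rw [iterate_succ_apply']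
      exact (hu n).trans (hφ.mono _ _ (hu0 n) ih)
  exact squeeze_zero hu0 h_le_iterate (hφ.tendsto_iterate _ (hu0 0))

section Contraction

variable {M : Type*} [MetricSpace M] {S : M → M}

theorem lipschitzWith_one (hφ : IsComparisonFunction φ)
    (hS : ∀ x y, dist (S x) (S y) ≤ φ (dist x y)) : LipschitzWith 1 S := by
  refine LipschitzWith.of_dist_le_mul fun x y => ?_
  rcases eq_or_ne x y with rfl | hxy
  · simp
  · simpa using (hS x y).trans (hφ.lt_self (dist_pos.2 hxy)).le

theorem tendsto_dist_iterate (hφ : IsComparisonFunction φ)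
    (hS : ∀ x y, dist (S x) (S y) ≤ φ (dist x y)) (x y : M) :
    Tendsto (fun n => dist (S^[n] x) (S^[n] y)) atTop (𝓝 0) :=
  hφ.tendsto_zero_of_le_map (fun _ => dist_nonneg) fun n => by
    simpa only [iterate_succ_apply'] using hS _ _

theorem cauchySeq_iterate (hφ : IsComparisonFunction φ)
    (hS : ∀ x y, dist (S x) (S y) ≤ φ (dist x y)) (x : M) :
    CauchySeq fun n => S^[n] x := by
  set y : ℕ → M := fun n => S^[n] x
  have hy_succ : ∀ n, y (n + 1) = S (y n) := fun n => iterate_succ_apply' S n x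
  have h_step : Tendsto (fun n => dist (y (n + 1)) (y n)) atTop (𝓝 0) := by
    simpa only [y, iterate_succ_apply] using hφ.tendsto_dist_iterate hS (S x) x
  rw [Metric.cauchySeq_iff']
  intro ε hε
  have hφε := hφ.lt_self hε
  obtain ⟨N, hN⟩ := (h_step.eventually (eventually_lt_nhds (sub_pos.2 hφε))).exists
  refine ⟨N, fun m hm => ?_⟩
  induction m, hm using Nat.le_induction with
  | base => simpa using hε
  | succ m _ ih =>
    calc dist (y (m + 1)) (y N)
        ≤ dist (y (m + 1)) (y (N + 1)) + dist (y (N + 1)) (y N) := dist_triangle _ _ _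
      _ ≤ φ (dist (y m) (y N)) + dist (y (N + 1)) (y N) := by
          rw [hy_succ m, hy_succ N]; gcongr; exact hS _ _
      _ ≤ φ ε + dist (y (N + 1)) (y N) := by gcongr; exact hφ.mono _ _ dist_nonneg ih.le
      _ < ε := by linarith

theorem exists_fixedPt_tendsto_iterate [CompleteSpace M] [Nonempty M]
    (hφ : IsComparisonFunction φ) (hS : ∀ x y, dist (S x) (S y) ≤ φ (dist x y)) :
    ∃ p, IsFixedPt S p ∧ (∀ q, IsFixedPt S q → q = p) ∧
      ∀ x, Tendsto (fun n => S^[n] x) atTop (𝓝 p) := by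
  obtain ⟨p, hp⟩ := cauchySeq_tendsto_of_complete (hφ.cauchySeq_iterate hS (Classical.arbitrary M))
  have hp_fixed : IsFixedPt S p :=
    isFixedPt_of_tendsto_iterate hp (hφ.lipschitzWith_one hS).continuous.continuousAt
  have h_tendsto : ∀ x, Tendsto (fun n => S^[n] x) atTop (𝓝 p) := by
    intro x
    rw [tendsto_iff_dist_tendsto_zero]
    simpa only [(hp_fixed.iterate _).eq] using hφ.tendsto_dist_iterate hS x p
  refine ⟨p, hp_fixed, fun q hq => ?_, h_tendsto⟩
  simpa only [(hq.iterate _).eq, tendsto_const_nhds_iff] using h_tendsto q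

end Contraction

end IsComparisonFunction

section Averaged

variable {X : Type*} [NormedAddCommGroup X] [NormedSpace ℝ X]

def averagedMap (lam : ℝ) (T : X → X) (x : X) : X := (1 - lam) • x + lam • T x

theorem isFixedPt_averagedMap_iff {lam : ℝ} (hlam : lam ≠ 0) {T : X → X} {z : X} :
    IsFixedPt (averagedMap lam T) z ↔ IsFixedPt T z := by
  have h : averagedMap lam T z - z = lam • (T z - z) := by unfold averagedMap; module
  rw [IsFixedPt, IsFixedPt, ← sub_eq_zero, h, smul_eq_zero, sub_eq_zero]
  simp [hlam]

theorem dist_averagedMap_le {T : X → X} {b : ℝ} (hb : 0 ≤ b) {φ : ℝ → ℝ}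
    (hT : ∀ x y : X, ‖b • (x - y) + T x - T y‖ ≤ (b + 1) * φ ‖x - y‖) (x y : X) :
    dist (averagedMap (b + 1)⁻¹ T x) (averagedMap (b + 1)⁻¹ T y) ≤ φ (dist x y) := by
  have hb1 : b + 1 ≠ 0 := by positivity
  have h_sub : averagedMap (b + 1)⁻¹ T x - averagedMap (b + 1)⁻¹ T y
      = (b + 1)⁻¹ • (b • (x - y) + T x - T y) := by
    have : 1 - (b + 1)⁻¹ = (b + 1)⁻¹ * b := by field_simp; ring
    unfold averagedMap; rw [this]; module
  rw [dist_eq_norm, dist_eq_norm, h_sub, norm_smul, Real.norm_of_nonneg (by positivity),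
    inv_mul_le_iff₀ (by positivity)]
  exact hT x y

end Averaged

theorem eq_iterate_of_succ {α : Type*} {f : α → α} {u : ℕ → α} (hu : ∀ n, u (n + 1) = f (u n)) :
    u = fun n => f^[n] (u 0) := by
  funext n
  induction n with
  | zero => rfl
  | succ n ih => rw [hu, ih, iterate_succ_apply']

theorem enriched_phi_contraction_general
    {X : Type*} [NormedAddCommGroup X] [NormedSpace ℝ X] [CompleteSpace X]
    (T : X → X) (b : ℝ) (hb : 0 ≤ b) (φ : ℝ → ℝ)
    (hφmono : ∀ s t : ℝ, 0 ≤ s → s ≤ t → φ s ≤ φ t)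
    (hφiter : ∀ t : ℝ, 0 ≤ t → Filter.Tendsto (fun n => φ^[n] t) Filter.atTop (nhds 0))
    (hT : ∀ x y : X, ‖b • (x - y) + T x - T y‖ ≤ (b + 1) * φ ‖x - y‖) :
    ∃ p : X, T p = p ∧ (∀ q : X, T q = q → q = p) ∧
      ∃ lam ∈ Set.Ioc (0:ℝ) 1, ∀ x : ℕ → X,
        (∀ n, x (n + 1) = (1 - lam) • x n + lam • T (x n)) →
        Filter.Tendsto x Filter.atTop (nhds p) := by
  have hlam : (b + 1)⁻¹ ∈ Set.Ioc (0 : ℝ) 1 :=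
    ⟨by positivity, inv_le_one_of_one_le₀ (by linarith)⟩
  obtain ⟨p, hp, hp_unique, hp_tendsto⟩ :=
    IsComparisonFunction.exists_fixedPt_tendsto_iterate ⟨hφmono, hφiter⟩ (dist_averagedMap_le hb hT)
  refine ⟨p, (isFixedPt_averagedMap_iff hlam.1.ne').1 hp,
    fun q hq => hp_unique q ((isFixedPt_averagedMap_iff hlam.1.ne').2 hq), _, hlam, fun x hx => ?_⟩
  rw [eq_iterate_of_succ (f := averagedMap (b + 1)⁻¹ T) hx]
  exact hp_tendsto _

theorem enriched_phi_contraction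
    {X : Type*} [NormedAddCommGroup X] [NormedSpace ℝ X] [CompleteSpace X]
    (T : X → X) (b : ℝ) (hb : 0 ≤ b) (φ : ℝ → ℝ)
    (hφ0 : ∀ t : ℝ, 0 ≤ t → 0 ≤ φ t)
    (hφmono : ∀ s t : ℝ, 0 ≤ s → s ≤ t → φ s ≤ φ t)
    (hφiter : ∀ t : ℝ, 0 ≤ t → Filter.Tendsto (fun n => φ^[n] t) Filter.atTop (nhds 0))
    (hT : ∀ x y : X, ‖b • (x - y) + T x - T y‖ ≤ (b + 1) * φ ‖x - y‖) :
    ∃ p : X, T p = p ∧ (∀ q : X, T q = q → q = p) ∧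
      ∃ lam ∈ Set.Ioc (0:ℝ) 1, ∀ x : ℕ → X,
        (∀ n, x (n + 1) = (1 - lam) • x n + lam • T (x n)) →
        Filter.Tendsto x Filter.atTop (nhds p) :=
  enriched_phi_contraction_general T b hb φ hφmono hφiter hT
end

section
/- Let H be a real Hilbert space and C ⊆ H. A mapping T : C → H is k-strictly pseudocontractive (i.e., ‖Tx-Ty‖² ≤ ‖x-y‖² + k‖x-y-(Tx-Ty)‖² for all x,y ∈ C, for some k ∈ (0,1)) if and only if T is b-enriched nonexpansive with b = k/(1-k), i.e., ‖b(x-y)+Tx-Ty‖ ≤ (b+1)‖x-y‖ for all x,y ∈ C. -/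
lemma key_aux {H : Type*} [NormedAddCommGroup H] [InnerProductSpace ℝ H]
    (u v : H) (k : ℝ) (hk0 : 0 < k) (hk1 : k < 1) :
    (‖v‖ ^ 2 ≤ ‖u‖ ^ 2 + k * ‖u - v‖ ^ 2) ↔
      ‖(k / (1 - k)) • u + v‖ ≤ (k / (1 - k) + 1) * ‖u‖ := by
  set b : ℝ := k / (1 - k) with hbdef
  have h1k : (0:ℝ) < 1 - k := by linarith
  have hb : 0 ≤ b := div_nonneg hk0.le h1k.le
  have hbk : b * (1 - k) = k := by rw [hbdef, div_mul_cancel₀ _ h1k.ne']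
  rw [← pow_le_pow_iff_left₀ (norm_nonneg _) (by positivity) two_ne_zero]
  have h1 : ‖b • u + v‖ ^ 2 = b ^ 2 * ‖u‖ ^ 2 + 2 * b * inner ℝ u v + ‖v‖ ^ 2 := by
    rw [norm_add_sq_real, norm_smul, real_inner_smul_left]
    rw [Real.norm_eq_abs, abs_of_nonneg hb]; ring
  have h2 : ‖u - v‖ ^ 2 = ‖u‖ ^ 2 - 2 * inner ℝ u v + ‖v‖ ^ 2 := by
    rw [norm_sub_sq_real]
  rw [h1, h2, mul_pow]
  constructor <;> intro h <;> nlinarith [sq_nonneg (1 - k), sq_nonneg b, mul_pos h1k h1k]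

theorem strictly_pseudocontractive_iff_enriched_nonexpansive
    {H : Type*} [NormedAddCommGroup H] [InnerProductSpace ℝ H]
    (C : Set H) (T : H → H) (k : ℝ) (hk : k ∈ Set.Ioo (0:ℝ) 1) :
    (∀ x ∈ C, ∀ y ∈ C,
        ‖T x - T y‖ ^ 2 ≤ ‖x - y‖ ^ 2 + k * ‖x - y - (T x - T y)‖ ^ 2) ↔
    (∀ x ∈ C, ∀ y ∈ C,
        ‖(k / (1 - k)) • (x - y) + T x - T y‖ ≤ (k / (1 - k) + 1) * ‖x - y‖) := by
  obtain ⟨hk0, hk1⟩ := hk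
  constructor <;> intro h x hx y hy <;>
    have h' := h x hx y hy <;>
    have hkey := key_aux (x - y) (T x - T y) k hk0 hk1
  · rw [← add_sub_assoc] at hkey
    exact hkey.mp h'
  · rw [← add_sub_assoc] at hkey
    exact hkey.mpr h'
end
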